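/- Let G be a finite simple graph with n vertices and m edges, and let k and d be positive integers. Let G' be the graph obtained from G as follows: every edge e = {u,v} of G is replaced by a path on vertices u, u_v, y_e, v_u, v (where u_v, y_e, v_u are new vertices), and d − 1 new pendant leaves are attached to y_e. Then G has a set S ⊆ V(G) with |S| ≤ k such that every vertex of G − S has degree at most d in G − S, if and only if G' has a set S' ⊆ V(G') with |S'| ≤ k + m such that every connected component of G' − S' has at most d + 1 vertices. -/

import Mathlib

open SimpleGraph

variable {V : Type*}

/-- The vertex sets of the connected components of `G − S`
(the subgraph of `G` induced on the complement of `S`). -/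
def ccSets {W : Type*} (G : SimpleGraph W) (S : Set W) : Set (Set W) :=
  {D | ∃ c : (G.induce Sᶜ).ConnectedComponent, D = Subtype.val '' c.supp}

/-- The vertex type of the graph `G'` obtained from `G` by subdividing every edge
`e = {u,v}` three times (new vertices `u_v`, `y_e`, `v_u`) and attaching `d − 1` pendant
leaves to `y_e`: original vertices, one vertex `u_v` per ordered adjacent pair `(u,v)`, one
vertex `y_e` per edge `e`, and `d − 1` leaves per edge. -/
abbrev SubVert (G : SimpleGraph V) (d : ℕ) : Type _ :=
  V ⊕ {p : V × V // G.Adj p.1 p.2} ⊕ ↥G.edgeSet ⊕ (↥G.edgeSet × Fin (d - 1))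

/-- The base adjacency relation of `G'`: `u ~ u_v`; `u_v ~ y_e` for `e = {u,v}`;
`y_e ~` each of its `d − 1` leaves. -/
def subRel (G : SimpleGraph V) (d : ℕ) : SubVert G d → SubVert G d → Prop
  | Sum.inl a, Sum.inr (Sum.inl p) => a = p.1.1
  | Sum.inr (Sum.inl p), Sum.inr (Sum.inr (Sum.inl e)) => (e : Sym2 V) = s(p.1.1, p.1.2)
  | Sum.inr (Sum.inr (Sum.inl e)), Sum.inr (Sum.inr (Sum.inr q)) => e = q.1
  | _, _ => False

/-- The graph `G'` obtained from `G` by subdividing every edge three times and attaching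
`d − 1` pendant leaves to the middle vertex of each subdivided edge. -/
def subGraph (G : SimpleGraph V) (d : ℕ) : SimpleGraph (SubVert G d) :=
  SimpleGraph.fromRel (subRel G d)

/-!
Every vertex of the gadget of an edge `e` (the two subdivision vertices, `y_e` and its `d − 1`
leaves) is adjacent to `y_e`, so the gadget is a connected set of `d + 2` vertices and every
solution `S'` deletes at least one vertex of each gadget; this accounts for the `m` extra
deletions.

Given `S`, delete `S` and, in each gadget, `u_v` if `u ∉ S` and `v ∈ S`, and `y_e` otherwise.
A surviving `u ∉ S` then lies in a component made of `u` and the `u_v` with `v ∉ S`, of size at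
most `d + 1`, and every other component lies in a single gadget with one vertex deleted.

Conversely, let `S` consist of the original vertices in `S'` and one endpoint of every edge whose
gadget is hit at least twice. If `u, v ∉ S` are adjacent, the gadget of `uv` is hit once, and
not at `u_v`: otherwise `v`, `v_u`, `y_e` and the leaves would form a component with `d + 2`
vertices. So `u` reaches `u_v` for each of its neighbours `v ∉ S`, which bounds its degree.
-/

section ComponentBounds

variable {W : Type*} {H : SimpleGraph W} {S : Set W}

theorem ncard_le_of_forall_reachable [Finite W] {N : ℕ}
    (hcomp : ∀ D ∈ ccSets H S, D.ncard ≤ N) {x : W} (hx : x ∉ S) {T : Set W}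
    (hT : ∀ t ∈ T, ∃ ht : t ∉ S, (H.induce Sᶜ).Reachable ⟨x, hx⟩ ⟨t, ht⟩) : T.ncard ≤ N := by
  refine (Set.ncard_le_ncard ?_ (Set.toFinite _)).trans
    (hcomp _ ⟨(H.induce Sᶜ).connectedComponentMk ⟨x, hx⟩, rfl⟩)
  intro t ht
  obtain ⟨ht', hreach⟩ := hT t ht
  exact ⟨⟨t, ht'⟩, ConnectedComponent.sound hreach.symm, rfl⟩

theorem ncard_le_of_forall_mem_ccSets_of_adj_imp_eq [Finite W] {L : Type*} (f : W → L)
    (hf : ∀ a b, a ∉ S → b ∉ S → H.Adj a b → f a = f b) {N : ℕ}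
    (hN : ∀ l, {a | a ∉ S ∧ f a = l}.ncard ≤ N) : ∀ D ∈ ccSets H S, D.ncard ≤ N := by
  rintro _ ⟨c, rfl⟩
  obtain ⟨x, rfl⟩ := c.exists_rep
  refine (Set.ncard_le_ncard ?_ (Set.toFinite _)).trans (hN (f x))
  rintro _ ⟨y, hy, rfl⟩
  obtain ⟨w⟩ := ConnectedComponent.exact hy
  refine ⟨y.2, ?_⟩
  clear hy
  induction w with
  | nil => rfl
  | @cons a b _ hadj _ ih => exact (hf a b a.2 b.2 hadj).trans ih

end ComponentBounds

theorem Set.ncard_eq_sum_ncard_inter_preimage {α β : Type*} [Finite α] [Fintype β]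
    (f : α → β) (A : Set α) : A.ncard = ∑ b, (A ∩ f ⁻¹' {b}).ncard := by
  classical
  have := Fintype.ofFinite α
  rw [Set.ncard_eq_toFinset_card', Finset.card_eq_sum_card_fiberwise (f := f) (t := Finset.univ)
    (fun _ _ => Finset.mem_coe.mpr (Finset.mem_univ _))]
  refine Finset.sum_congr rfl fun b _ => ?_
  rw [Set.ncard_eq_toFinset_card']
  congr 1
  ext a
  simp

namespace SubVert

variable {G : SimpleGraph V} {d : ℕ}

abbrev orig (u : V) : SubVert G d := Sum.inl u
abbrev sub (p : {p : V × V // G.Adj p.1 p.2}) : SubVert G d := Sum.inr (Sum.inl p)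
abbrev mid (e : G.edgeSet) : SubVert G d := Sum.inr (Sum.inr (Sum.inl e))
abbrev leaf (e : G.edgeSet) (i : Fin (d - 1)) : SubVert G d := Sum.inr (Sum.inr (Sum.inr (e, i)))

def edgeOf : SubVert G d → Option G.edgeSet
  | Sum.inl _ => none
  | Sum.inr (Sum.inl p) => some ⟨s(p.1.1, p.1.2), G.mem_edgeSet.mpr p.2⟩
  | Sum.inr (Sum.inr (Sum.inl e)) => some e
  | Sum.inr (Sum.inr (Sum.inr q)) => some q.1

def gadget (e : G.edgeSet) : Set (SubVert G d) := edgeOf ⁻¹' {some e}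

theorem range_orig_eq_preimage_edgeOf :
    Set.range (orig : V → SubVert G d) = edgeOf ⁻¹' {none} := by
  ext (u | p | e | ⟨e, i⟩) <;> simp [edgeOf]

@[simp] theorem orig_notMem_gadget (u : V) (e : G.edgeSet) :
    (orig u : SubVert G d) ∉ gadget e :=
  nofun

@[simp] theorem sub_mem_gadget (p : {p : V × V // G.Adj p.1 p.2}) (e : G.edgeSet) :
    (sub p : SubVert G d) ∈ gadget e ↔ (e : Sym2 V) = s(p.1.1, p.1.2) := by
  simp [gadget, edgeOf, Subtype.ext_iff, eq_comm]

@[simp] theorem mid_mem_gadget (e' e : G.edgeSet) :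
    (mid e' : SubVert G d) ∈ gadget e ↔ e' = e := by
  simp [gadget, edgeOf]

@[simp] theorem leaf_mem_gadget (e' e : G.edgeSet) (i : Fin (d - 1)) :
    leaf e' i ∈ gadget e ↔ e' = e := by
  simp [gadget, edgeOf]

theorem gadget_eq {e : G.edgeSet} {u v : V} (huv : G.Adj u v) (he : (e : Sym2 V) = s(u, v)) :
    (gadget e : Set (SubVert G d)) = insert (sub ⟨(u, v), huv⟩)
      (insert (sub ⟨(v, u), huv.symm⟩) (insert (mid e) (Set.range (leaf e)))) := by
  ext (w | p | e' | ⟨e', i⟩)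
  · simp
  · obtain ⟨⟨a, b⟩, hab⟩ := p
    simp only [sub_mem_gadget, he, Sym2.eq_iff, Set.mem_insert_iff, Sum.inr.injEq, Sum.inl.injEq,
      Subtype.mk.injEq, Prod.mk.injEq, Set.mem_range, reduceCtorEq, exists_false, or_false]
    tauto
  · simp
  · simpa using eq_comm

theorem ncard_gadget (hd : 0 < d) (e : G.edgeSet) :
    (gadget e : Set (SubVert G d)).ncard = d + 2 := by
  obtain ⟨e, he⟩ := e
  induction e using Sym2.ind with | h u v => ?_
  rw [gadget_eq (d := d) (G.mem_edgeSet.mp he) rfl, Set.ncard_insert_of_notMem,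
    Set.ncard_insert_of_notMem, Set.ncard_insert_of_notMem, Set.ncard_range_of_injective,
    Nat.card_fin]
  · omega
  · intro i j h
    simpa using h
  · simp
  · simp
  · simpa [Prod.ext_iff] using fun h => absurd h (G.mem_edgeSet.mp he).ne

theorem adj_orig_sub (p : {p : V × V // G.Adj p.1 p.2}) :
    (subGraph G d).Adj (orig p.1.1) (sub p) := by
  simp [subGraph, subRel]

theorem adj_mid_of_mem_gadget {e : G.edgeSet} {z : SubVert G d} (hz : z ∈ gadget e)
    (hne : z ≠ mid e) : (subGraph G d).Adj (mid e) z := by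
  rcases z with u | p | e' | ⟨e', i⟩
  · simp at hz
  · simp_all [subGraph, subRel]
  · simp_all
  · simp_all [subGraph, subRel]

theorem ncard_eq_ncard_inter_range_orig_add_sum [Finite V] [Fintype G.edgeSet]
    (A : Set (SubVert G d)) :
    A.ncard = (A ∩ Set.range orig).ncard + ∑ e, (A ∩ gadget e).ncard := by
  rw [Set.ncard_eq_sum_ncard_inter_preimage edgeOf A, Fintype.sum_option,
    range_orig_eq_preimage_edgeOf]
  rfl

def star (u : V) (S : Set V) : Set (SubVert G d) :=
  insert (orig u) (sub '' {p | p.1.1 = u ∧ p.1.2 ∉ S})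

theorem ncard_star [Finite V] (u : V) (S : Set V) :
    (star u S : Set (SubVert G d)).ncard = (G.neighborSet u \ S).ncard + 1 := by
  rw [star, Set.ncard_insert_of_notMem (by simp),
    Set.ncard_image_of_injective _ (fun p q h => by simpa using h)]
  congr 1
  refine Set.ncard_congr (fun p _ => p.1.2) ?_ ?_ ?_
  · rintro ⟨⟨a, b⟩, hab⟩ ⟨rfl, hb⟩
    exact ⟨hab, hb⟩
  · rintro ⟨⟨a, b⟩, hab⟩ ⟨⟨a', b'⟩, hab'⟩ ⟨ha, -⟩ ⟨ha', -⟩ (hb : b = b')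
    simp_all
  · rintro v ⟨huv, hv⟩
    exact ⟨⟨(u, v), huv⟩, ⟨rfl, hv⟩, rfl⟩

section Forward

variable (S : Set V)

def toComponentDeletion : Set (SubVert G d) := {z | match z with
  | Sum.inl u => u ∈ S
  | Sum.inr (Sum.inl p) => p.1.1 ∉ S ∧ p.1.2 ∈ S
  | Sum.inr (Sum.inr (Sum.inl e)) =>
      ¬ ∃ p : {p : V × V // G.Adj p.1 p.2},
        (e : Sym2 V) = s(p.1.1, p.1.2) ∧ p.1.1 ∉ S ∧ p.1.2 ∈ S
  | Sum.inr (Sum.inr (Sum.inr _)) => False}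

variable {S}

@[simp] theorem orig_mem_toComponentDeletion {u : V} :
    (orig u : SubVert G d) ∈ toComponentDeletion S ↔ u ∈ S := Iff.rfl

@[simp] theorem sub_mem_toComponentDeletion {p : {p : V × V // G.Adj p.1 p.2}} :
    (sub p : SubVert G d) ∈ toComponentDeletion S ↔ p.1.1 ∉ S ∧ p.1.2 ∈ S := Iff.rfl

@[simp] theorem mid_mem_toComponentDeletion {e : G.edgeSet} :
    (mid e : SubVert G d) ∈ toComponentDeletion S ↔
      ¬ ∃ p : {p : V × V // G.Adj p.1 p.2},
        (e : Sym2 V) = s(p.1.1, p.1.2) ∧ p.1.1 ∉ S ∧ p.1.2 ∈ S :=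
  Iff.rfl

@[simp] theorem leaf_notMem_toComponentDeletion {e : G.edgeSet} {i : Fin (d - 1)} :
    leaf e i ∉ toComponentDeletion S := nofun

theorem eq_or_fst_mem_of_crossing {p q : {p : V × V // G.Adj p.1 p.2}}
    (hpq : s(p.1.1, p.1.2) = s(q.1.1, q.1.2)) (hq : q.1.1 ∉ S ∧ q.1.2 ∈ S) :
    p = q ∨ p.1.1 ∈ S := by
  rcases Sym2.eq_iff.mp hpq with ⟨h1, h2⟩ | ⟨h1, -⟩
  · exact Or.inl (Subtype.ext (Prod.ext h1 h2))
  · exact Or.inr (h1 ▸ hq.2)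

theorem toComponentDeletion_inter_gadget_nonempty (e : G.edgeSet) :
    (toComponentDeletion S ∩ gadget e : Set (SubVert G d)).Nonempty := by
  by_cases h : ∃ p : {p : V × V // G.Adj p.1 p.2},
      (e : Sym2 V) = s(p.1.1, p.1.2) ∧ p.1.1 ∉ S ∧ p.1.2 ∈ S
  · obtain ⟨p, he, hp⟩ := h
    exact ⟨sub p, hp, by simpa using he⟩
  · exact ⟨mid e, h, by simp⟩

theorem ncard_toComponentDeletion_inter_gadget_le_one [Finite V] (e : G.edgeSet) :
    (toComponentDeletion S ∩ gadget e : Set (SubVert G d)).ncard ≤ 1 := by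
  refine (Set.ncard_le_one_iff (Set.toFinite _)).mpr ?_
  rintro (u | p | e₁ | ⟨e₁, i⟩) (u' | q | e₂ | ⟨e₂, j⟩) ⟨ha, hae⟩ ⟨hb, hbe⟩ <;>
    simp only [orig_notMem_gadget, sub_mem_gadget, mid_mem_gadget,
      leaf_notMem_toComponentDeletion, sub_mem_toComponentDeletion,
      mid_mem_toComponentDeletion] at ha hae hb hbe
  · exact (eq_or_fst_mem_of_crossing (hae.symm.trans hbe) hb).resolve_right ha.1 ▸ rfl
  · exact absurd ⟨p, hbe ▸ hae, ha⟩ hb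
  · exact absurd ⟨q, hae ▸ hbe, hb⟩ ha
  · rw [hae, hbe]

theorem ncard_toComponentDeletion_le [Finite V] :
    (toComponentDeletion S : Set (SubVert G d)).ncard ≤ S.ncard + G.edgeSet.ncard := by
  have := Fintype.ofFinite G.edgeSet
  have horig : toComponentDeletion S ∩ Set.range orig = (orig '' S : Set (SubVert G d)) := by
    ext z
    constructor
    · rintro ⟨hz, u, rfl⟩
      exact ⟨u, hz, rfl⟩
    · rintro ⟨u, hu, rfl⟩
      exact ⟨hu, u, rfl⟩
  rw [ncard_eq_ncard_inter_range_orig_add_sum, horig,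
    Set.ncard_image_of_injective _ Sum.inl_injective]
  gcongr
  calc ∑ e, (toComponentDeletion S ∩ gadget e : Set (SubVert G d)).ncard
      ≤ ∑ _e : G.edgeSet, 1 :=
        Finset.sum_le_sum fun e _ => ncard_toComponentDeletion_inter_gadget_le_one e
    _ = G.edgeSet.ncard := by
      rw [← Finset.card_eq_sum_ones, Finset.card_univ, ← Nat.card_eq_fintype_card,
        Nat.card_coe_set_eq]

-- Every component of `G' − S'` lies in one fibre of `block S`: a star or a gadget.
variable (S) in
open Classical in
noncomputable def block : SubVert G d → V ⊕ G.edgeSet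
  | Sum.inl u => Sum.inl u
  | Sum.inr (Sum.inl p) =>
      if p.1.1 ∈ S then Sum.inr ⟨s(p.1.1, p.1.2), G.mem_edgeSet.mpr p.2⟩ else Sum.inl p.1.1
  | Sum.inr (Sum.inr (Sum.inl e)) => Sum.inr e
  | Sum.inr (Sum.inr (Sum.inr q)) => Sum.inr q.1

theorem block_eq_of_subRel {a b : SubVert G d} (ha : a ∉ toComponentDeletion S)
    (hb : b ∉ toComponentDeletion S) (hab : subRel G d a b) : block S a = block S b := by
  rcases a with u | p | e | ⟨e, i⟩ <;> rcases b with u' | q | e' | ⟨e', i'⟩ <;>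
    simp only [subRel] at hab
  · simp only [orig_mem_toComponentDeletion] at ha
    simp [block, ← hab, ha]
  · obtain ⟨q, he', hq⟩ := not_not.mp hb
    have hp : p.1.1 ∈ S := (eq_or_fst_mem_of_crossing (hab.symm.trans he') hq).resolve_left
      fun hpq => ha (hpq ▸ hq)
    simp [block, hp, Subtype.ext_iff, hab]
  · simp [block, hab]

theorem block_eq_of_adj {a b : SubVert G d} (ha : a ∉ toComponentDeletion S)
    (hb : b ∉ toComponentDeletion S) (hab : (subGraph G d).Adj a b) : block S a = block S b :=
  hab.2.elim (block_eq_of_subRel ha hb) fun h => (block_eq_of_subRel hb ha h).symm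

theorem block_fiber_inl_subset {u : V} :
    {a : SubVert G d | a ∉ toComponentDeletion S ∧ block S a = Sum.inl u} ⊆
      {_a | u ∉ S} ∩ star u S := by
  rintro (u' | p | e' | ⟨e', i⟩) ⟨ha, hl⟩ <;>
    simp only [block, Sum.inl.injEq, reduceCtorEq] at hl
  · subst hl
    exact ⟨ha, Set.mem_insert _ _⟩
  · split_ifs at hl with hp
    obtain rfl := Sum.inl_injective hl
    exact ⟨hp, Or.inr ⟨p, ⟨rfl, fun h => ha ⟨hp, h⟩⟩, rfl⟩⟩

theorem block_fiber_inr_subset {e : G.edgeSet} :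
    {a : SubVert G d | a ∉ toComponentDeletion S ∧ block S a = Sum.inr e} ⊆
      gadget e \ toComponentDeletion S := by
  rintro (u' | p | e' | ⟨e', i⟩) ⟨ha, hl⟩ <;>
    simp only [block, Sum.inr.injEq, reduceCtorEq] at hl
  · split_ifs at hl
    obtain rfl := Sum.inr_injective hl
    exact ⟨by simp, ha⟩
  · exact ⟨by simpa using hl, ha⟩
  · exact ⟨by simpa using hl, ha⟩

theorem ncard_block_fiber_le [Finite V] (hd : 0 < d)
    (hdeg : ∀ v ∉ S, (G.neighborSet v \ S).ncard ≤ d) (l : V ⊕ G.edgeSet) :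
    {a : SubVert G d | a ∉ toComponentDeletion S ∧ block S a = l}.ncard ≤ d + 1 := by
  rcases l with u | e
  · by_cases hu : u ∈ S
    · rw [Set.eq_empty_of_subset_empty fun a ha => (block_fiber_inl_subset ha).1 hu]
      simp
    · calc _ ≤ (star u S : Set (SubVert G d)).ncard :=
            Set.ncard_le_ncard (fun a ha => (block_fiber_inl_subset ha).2) (Set.toFinite _)
        _ ≤ d + 1 := by rw [ncard_star]; exact Nat.succ_le_succ (hdeg u hu)
  · obtain ⟨z, hz, hze⟩ := toComponentDeletion_inter_gadget_nonempty (d := d) (S := S) e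
    calc _ ≤ (gadget e \ {z}).ncard := by
          refine Set.ncard_le_ncard (fun a ha => ?_) (Set.toFinite _)
          obtain ⟨hae, haS⟩ := block_fiber_inr_subset ha
          exact ⟨hae, fun haz => haS (haz ▸ hz)⟩
      _ = d + 1 := by rw [Set.ncard_sdiff_singleton_of_mem hze, ncard_gadget hd]; rfl

theorem ccSets_toComponentDeletion_ncard_le [Finite V] (hd : 0 < d)
    (hdeg : ∀ v ∉ S, (G.neighborSet v \ S).ncard ≤ d) :
    ∀ D ∈ ccSets (subGraph G d) (toComponentDeletion S), D.ncard ≤ d + 1 :=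
  ncard_le_of_forall_mem_ccSets_of_adj_imp_eq (block S)
    (fun _ _ ha hb hab => block_eq_of_adj ha hb hab) (ncard_block_fiber_le hd hdeg)

end Forward

section Backward

variable {S' : Set (SubVert G d)}

theorem reachable_mid_of_mem_gadget {e : G.edgeSet} (hm : mid e ∉ S') {z : SubVert G d}
    (hz : z ∈ gadget e) (hzS : z ∉ S') :
    ((subGraph G d).induce S'ᶜ).Reachable ⟨mid e, hm⟩ ⟨z, hzS⟩ := by
  by_cases h : z = mid e
  · subst h
    rfl
  · exact Adj.reachable (adj_mid_of_mem_gadget hz h)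

variable (S') in
def toDegreeDeletion : Set V :=
  {u | orig u ∈ S'} ∪
    (fun e : G.edgeSet => (e : Sym2 V).out.1) '' {e | 2 ≤ (S' ∩ gadget e).ncard}

variable [Finite V]

theorem inter_gadget_nonempty_of_ccSets (hd : 0 < d)
    (hcomp : ∀ D ∈ ccSets (subGraph G d) S', D.ncard ≤ d + 1)
    (e : G.edgeSet) : (S' ∩ gadget e).Nonempty := by
  by_contra h
  have halive : ∀ z ∈ gadget e, z ∉ S' := fun z hz hzS => h ⟨z, hzS, hz⟩
  have hm : mid e ∉ S' := halive _ (by simp)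
  have := ncard_le_of_forall_reachable hcomp hm (T := gadget e)
    fun z hz => ⟨halive z hz, reachable_mid_of_mem_gadget hm hz _⟩
  rw [ncard_gadget hd] at this
  omega

theorem sub_notMem_of_ncard_inter_gadget_le_one (hd : 0 < d)
    (hcomp : ∀ D ∈ ccSets (subGraph G d) S', D.ncard ≤ d + 1)
    {u v : V} (huv : G.Adj u v) {e : G.edgeSet}
    (he : (e : Sym2 V) = s(u, v)) (hv : orig v ∉ S') (hle : (S' ∩ gadget e).ncard ≤ 1) :
    sub ⟨(u, v), huv⟩ ∉ S' := by
  intro hs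
  have honly : ∀ z ∈ gadget e, z ≠ sub ⟨(u, v), huv⟩ → z ∉ S' := fun z hz hne hzS =>
    hne ((Set.ncard_le_one_iff (Set.toFinite _)).mp hle ⟨hzS, hz⟩ ⟨hs, by simp [he]⟩)
  have hm : mid e ∉ S' := honly _ (by simp) (by simp)
  have hvu : sub ⟨(v, u), huv.symm⟩ ∉ S' :=
    honly _ (by simp [he, Sym2.eq_swap]) (by simpa [Prod.ext_iff] using fun h => absurd h huv.ne')
  have := ncard_le_of_forall_reachable hcomp hm
    (T := insert (orig v) (gadget e \ {sub ⟨(u, v), huv⟩})) ?_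
  · rw [Set.ncard_insert_of_notMem (by simp), Set.ncard_sdiff_singleton_of_mem (by simp [he]),
      ncard_gadget hd] at this
    omega
  rintro z (rfl | ⟨hz, hne⟩)
  · exact ⟨hv, (reachable_mid_of_mem_gadget hm (by simp [he, Sym2.eq_swap]) hvu).trans
      (Adj.reachable (adj_orig_sub _).symm)⟩
  · exact ⟨honly z hz hne, reachable_mid_of_mem_gadget hm hz _⟩

theorem ncard_toDegreeDeletion_add_le (hd : 0 < d)
    (hcomp : ∀ D ∈ ccSets (subGraph G d) S', D.ncard ≤ d + 1) :
    (toDegreeDeletion S').ncard + G.edgeSet.ncard ≤ S'.ncard := by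
  classical
  have := Fintype.ofFinite G.edgeSet
  have horig : S' ∩ Set.range orig = orig '' {u | orig u ∈ S'} := by
    ext z
    constructor
    · rintro ⟨hz, u, rfl⟩
      exact ⟨u, hz, rfl⟩
    · rintro ⟨u, hu, rfl⟩
      exact ⟨hu, u, rfl⟩
  have hdouble : {e : G.edgeSet | 2 ≤ (S' ∩ gadget e).ncard}.ncard + G.edgeSet.ncard =
      ∑ e, if 2 ≤ (S' ∩ gadget e).ncard then 2 else 1 := by
    rw [Set.ncard_eq_toFinset_card', Set.toFinset_ofPred, Finset.card_filter,
      ← Nat.card_coe_set_eq, Nat.card_eq_fintype_card, Fintype.card_eq_sum_ones,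
      ← Finset.sum_add_distrib]
    exact Finset.sum_congr rfl fun e _ => by split_ifs <;> rfl
  calc (toDegreeDeletion S').ncard + G.edgeSet.ncard
      ≤ {u | orig u ∈ S'}.ncard + {e : G.edgeSet | 2 ≤ (S' ∩ gadget e).ncard}.ncard +
          G.edgeSet.ncard := by
        gcongr
        exact (Set.ncard_union_le _ _).trans (by gcongr; exact Set.ncard_image_le (Set.toFinite _))
    _ = (S' ∩ Set.range orig).ncard + ∑ e, if 2 ≤ (S' ∩ gadget e).ncard then 2 else 1 := by
        rw [horig, Set.ncard_image_of_injective _ Sum.inl_injective, add_assoc, hdouble]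
    _ ≤ (S' ∩ Set.range orig).ncard + ∑ e, (S' ∩ gadget e).ncard := by
        gcongr with e
        split_ifs with he
        · exact he
        · exact (inter_gadget_nonempty_of_ccSets hd hcomp e).ncard_pos
    _ = S'.ncard := (ncard_eq_ncard_inter_range_orig_add_sum S').symm

theorem ncard_neighborSet_diff_toDegreeDeletion_le (hd : 0 < d)
    (hcomp : ∀ D ∈ ccSets (subGraph G d) S', D.ncard ≤ d + 1)
    {u : V} (hu : u ∉ toDegreeDeletion S') :
    (G.neighborSet u \ toDegreeDeletion S').ncard ≤ d := by
  have hu' : orig u ∉ S' := fun h => hu (Or.inl h)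
  suffices (star u (toDegreeDeletion S') : Set (SubVert G d)).ncard ≤ d + 1 by
    rw [ncard_star] at this
    omega
  refine ncard_le_of_forall_reachable hcomp hu' ?_
  rintro z (rfl | ⟨⟨⟨u', v⟩, huv⟩, ⟨hu'u, hv⟩, rfl⟩)
  · exact ⟨hu', Reachable.refl _⟩
  · subst hu'u
    have hle : (S' ∩ gadget ⟨s(u', v), huv⟩).ncard ≤ 1 := by
      by_contra htwice
      have hmem : (s(u', v)).out.1 ∈ toDegreeDeletion S' :=
        Or.inr ⟨⟨s(u', v), huv⟩, by simp only [Set.mem_ofPred_eq]; omega, rfl⟩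
      rcases Sym2.mem_iff.mp (Sym2.out_fst_mem s(u', v)) with h | h <;> rw [h] at hmem
      exacts [hu hmem, hv hmem]
    exact ⟨sub_notMem_of_ncard_inter_gadget_le_one hd hcomp huv rfl (fun h => hv (Or.inl h)) hle,
      Adj.reachable (adj_orig_sub _)⟩

end Backward

end SubVert

theorem bddDegreeDeletion_iff_componentOrderConnectivity_general [Fintype V]
    (G : SimpleGraph V) (k d m : ℕ) (hd : 0 < d)
    (hm : m = G.edgeSet.ncard) :
    (∃ S : Set V, S.ncard ≤ k ∧ ∀ v ∉ S, ((G.neighborSet v) \ S).ncard ≤ d) ↔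
    (∃ S' : Set (SubVert G d), S'.ncard ≤ k + m ∧
      ∀ D ∈ ccSets (subGraph G d) S', D.ncard ≤ d + 1) := by
  subst hm
  constructor
  · rintro ⟨S, hS, hdeg⟩
    exact ⟨SubVert.toComponentDeletion S, SubVert.ncard_toComponentDeletion_le.trans (by omega),
      SubVert.ccSets_toComponentDeletion_ncard_le hd hdeg⟩
  · rintro ⟨S', hS', hcomp⟩
    have := SubVert.ncard_toDegreeDeletion_add_le hd hcomp
    exact ⟨SubVert.toDegreeDeletion S', by omega,
      fun v hv => SubVert.ncard_neighborSet_diff_toDegreeDeletion_le hd hcomp hv⟩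

/-- `G` has a set `S` of at most `k` vertices whose removal leaves maximum degree at most
`d`, iff `G'` has a set `S'` of at most `k + m` vertices whose removal leaves connected
components with at most `d + 1` vertices each (`m` = number of edges of `G`). -/
theorem bddDegreeDeletion_iff_componentOrderConnectivity [Fintype V] [DecidableEq V]
    (G : SimpleGraph V) (k d m : ℕ) (hk : 0 < k) (hd : 0 < d)
    (hm : m = G.edgeSet.ncard) :
    (∃ S : Set V, S.ncard ≤ k ∧ ∀ v ∉ S, ((G.neighborSet v) \ S).ncard ≤ d) ↔
    (∃ S' : Set (SubVert G d), S'.ncard ≤ k + m ∧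
      ∀ D ∈ ccSets (subGraph G d) S', D.ncard ≤ d + 1) :=
  bddDegreeDeletion_iff_componentOrderConnectivity_general G k d m hd hm
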